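/- Let N \ge 1, G = \sum_{n \le N} \mu(n)^2/\varphi(n), and let a : \{1,...,N\} \to \mathbb{C} satisfy a(1) = 1. With y(\ell) = \sum_{d \le N/\ell} a(d\ell)/d and z(\ell) = (\mu(\ell)/G) \cdot \ell/\varphi(\ell), one has the exact identity: \sum_{d,e \le N} a(d)\overline{a(e)}/\mathrm{lcm}(d,e) = 1/G + \sum_{\ell \le N} (\varphi(\ell)/\ell^2) |y(\ell) - z(\ell)|^2. -/

import Mathlib

/-!
Since `1 / [d, e] = gcd(d, e) / (d e)` and `gcd(d, e) = ∑_{ℓ ∣ d, ℓ ∣ e} φ(ℓ)`, the quadratic form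
diagonalizes as `∑_ℓ (φ(ℓ) / ℓ²) |y(ℓ)|²`. Möbius inversion gives `∑_ℓ μ(ℓ) y(ℓ) / ℓ = a(1) = 1`,
which says `∑_ℓ (φ(ℓ) / ℓ²) z(ℓ) y(ℓ) = 1 / G`, and the choice of `G` makes
`∑_ℓ (φ(ℓ) / ℓ²) z(ℓ)² = 1 / G`. Expanding `|y(ℓ) - z(ℓ)|²` gives the identity.
-/

open Finset ArithmeticFunction
open scoped ArithmeticFunction.Moebius Nat

theorem sum_divisors_moebius {R : Type*} [Ring R] (n : ℕ) :
    ∑ d ∈ n.divisors, (μ d : R) = if n = 1 then 1 else 0 := by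
  rw [← one_apply, ← coe_moebius_mul_coe_zeta, coe_mul_zeta_apply]
  simp only [intCoe_apply]

theorem filter_Icc_dvd_eq_divisors {N n : ℕ} (hn : n ∈ Icc 1 N) :
    {d ∈ Icc 1 N | d ∣ n} = n.divisors := by
  rw [mem_Icc] at hn
  ext d
  simp only [mem_filter, mem_Icc, Nat.mem_divisors]
  constructor
  · rintro ⟨-, hdn⟩
    exact ⟨hdn, by omega⟩
  · rintro ⟨hdn, -⟩
    have := Nat.le_of_dvd hn.1 hdn
    exact ⟨⟨Nat.pos_of_dvd_of_pos hdn hn.1, by omega⟩, hdn⟩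

theorem image_Icc_div_mul {N ℓ : ℕ} (hℓ : 0 < ℓ) :
    (Icc 1 (N / ℓ)).image (· * ℓ) = {d ∈ Icc 1 N | ℓ ∣ d} := by
  ext d
  simp only [mem_image, mem_filter, mem_Icc, Nat.le_div_iff_mul_le hℓ]
  constructor
  · rintro ⟨m, ⟨hm, hmN⟩, rfl⟩
    exact ⟨⟨Nat.one_le_iff_ne_zero.2 (by positivity), hmN⟩, dvd_mul_left ℓ m⟩
  · rintro ⟨⟨hd, hdN⟩, m, rfl⟩
    refine ⟨m, ⟨?_, by rwa [mul_comm]⟩, mul_comm m ℓ⟩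
    rcases m with _ | m <;> simp_all

theorem sum_filter_dvd_div_eq {K : Type*} [Field K] (N : ℕ) {ℓ : ℕ} (hℓ : 0 < ℓ) (f : ℕ → K) :
    ∑ d ∈ Icc 1 N with ℓ ∣ d, f d / d = (∑ m ∈ Icc 1 (N / ℓ), f (m * ℓ) / m) / ℓ := by
  rw [← image_Icc_div_mul hℓ, sum_image fun _ _ _ _ h ↦ Nat.eq_of_mul_eq_mul_right hℓ h, sum_div]
  simp only [Nat.cast_mul, div_div]

theorem natCast_gcd_eq_sum_totient {R : Type*} [Semiring R] {N d e : ℕ} (hd : d ∈ Icc 1 N) :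
    (d.gcd e : R) = ∑ ℓ ∈ Icc 1 N with ℓ ∣ d ∧ ℓ ∣ e, (φ ℓ : R) := by
  have hgcd : d.gcd e ∈ Icc 1 N := by
    rw [mem_Icc] at hd ⊢
    exact ⟨Nat.gcd_pos_of_pos_left e hd.1, (Nat.gcd_le_left e hd.1).trans hd.2⟩
  simp_rw [← Nat.dvd_gcd_iff, filter_Icc_dvd_eq_divisors hgcd, ← Nat.cast_sum, Nat.sum_totient]

theorem sum_sum_gcd_mul_eq_sum_totient_mul {R : Type*} [CommSemiring R] (N : ℕ) (f g : ℕ → R) :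
    ∑ d ∈ Icc 1 N, ∑ e ∈ Icc 1 N, d.gcd e * (f d * g e) =
      ∑ ℓ ∈ Icc 1 N, φ ℓ * ((∑ d ∈ Icc 1 N with ℓ ∣ d, f d) * ∑ e ∈ Icc 1 N with ℓ ∣ e, g e) := by
  calc _ = ∑ d ∈ Icc 1 N, ∑ e ∈ Icc 1 N, ∑ ℓ ∈ Icc 1 N,
          if ℓ ∣ d ∧ ℓ ∣ e then φ ℓ * (f d * g e) else 0 := by
        refine sum_congr rfl fun d hd ↦ sum_congr rfl fun e _ ↦ ?_
        rw [natCast_gcd_eq_sum_totient hd, sum_mul, sum_filter]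
    _ = ∑ ℓ ∈ Icc 1 N, ∑ d ∈ Icc 1 N, ∑ e ∈ Icc 1 N,
          if ℓ ∣ d ∧ ℓ ∣ e then φ ℓ * (f d * g e) else 0 :=
        (sum_congr rfl fun _ _ ↦ sum_comm).trans sum_comm
    _ = _ := by
        refine sum_congr rfl fun ℓ _ ↦ ?_
        rw [sum_mul_sum, mul_sum, sum_filter]
        refine sum_congr rfl fun d _ ↦ ?_
        rw [mul_sum, sum_filter]
        by_cases hd : ℓ ∣ d <;> simp [hd]

theorem sum_sum_mul_div_lcm_eq {K : Type*} [Field K] [CharZero K] (N : ℕ) (f g : ℕ → K) :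
    ∑ d ∈ Icc 1 N, ∑ e ∈ Icc 1 N, f d * g e / d.lcm e =
      ∑ ℓ ∈ Icc 1 N, φ ℓ / ℓ ^ 2 *
        ((∑ d ∈ Icc 1 (N / ℓ), f (d * ℓ) / d) * ∑ e ∈ Icc 1 (N / ℓ), g (e * ℓ) / e) := by
  calc _ = ∑ d ∈ Icc 1 N, ∑ e ∈ Icc 1 N, d.gcd e * (f d / d * (g e / e)) := by
        refine sum_congr rfl fun d hd ↦ sum_congr rfl fun e he ↦ ?_
        rw [mem_Icc] at hd he
        have hde : (d.gcd e : K) * d.lcm e = d * e := by exact_mod_cast Nat.gcd_mul_lcm d e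
        have : (d.lcm e : K) ≠ 0 := by exact_mod_cast Nat.lcm_ne_zero (by omega) (by omega)
        have : (d : K) ≠ 0 := by exact_mod_cast (by omega : d ≠ 0)
        have : (e : K) ≠ 0 := by exact_mod_cast (by omega : e ≠ 0)
        field_simp
        linear_combination -(f d * g e) * hde
    _ = _ := by
        rw [sum_sum_gcd_mul_eq_sum_totient_mul]
        refine sum_congr rfl fun ℓ hℓ ↦ ?_
        have hℓ0 := (mem_Icc.1 hℓ).1
        rw [sum_filter_dvd_div_eq N hℓ0, sum_filter_dvd_div_eq N hℓ0]
        field_simp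

theorem sum_sum_mul_conj_div_lcm_eq (N : ℕ) (a : ℕ → ℂ) :
    ∑ d ∈ Icc 1 N, ∑ e ∈ Icc 1 N, a d * starRingEnd ℂ (a e) / d.lcm e =
      ∑ ℓ ∈ Icc 1 N, ((φ ℓ / ℓ ^ 2 * ‖∑ d ∈ Icc 1 (N / ℓ), a (d * ℓ) / d‖ ^ 2 : ℝ) : ℂ) := by
  rw [sum_sum_mul_div_lcm_eq]
  refine sum_congr rfl fun ℓ _ ↦ ?_
  have hconj : ∑ e ∈ Icc 1 (N / ℓ), starRingEnd ℂ (a (e * ℓ)) / e =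
      starRingEnd ℂ (∑ e ∈ Icc 1 (N / ℓ), a (e * ℓ) / e) := by
    simp only [map_sum, map_div₀, map_natCast]
  rw [hconj, Complex.mul_conj']
  push_cast
  rfl

theorem sum_moebius_mul_sum_div_eq {K : Type*} [Field K] {N : ℕ} (hN : 1 ≤ N) (a : ℕ → K) :
    ∑ ℓ ∈ Icc 1 N, μ ℓ * (∑ d ∈ Icc 1 (N / ℓ), a (d * ℓ) / d) / ℓ = a 1 := by
  calc _ = ∑ ℓ ∈ Icc 1 N, ∑ n ∈ Icc 1 N with ℓ ∣ n, μ ℓ * (a n / n) := by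
        refine sum_congr rfl fun ℓ hℓ ↦ ?_
        rw [← mul_sum, sum_filter_dvd_div_eq N (mem_Icc.1 hℓ).1, mul_div_assoc]
    _ = ∑ n ∈ Icc 1 N, ∑ ℓ ∈ Icc 1 N with ℓ ∣ n, μ ℓ * (a n / n) :=
        sum_comm' fun ℓ n ↦ by simp only [mem_filter]; tauto
    _ = ∑ n ∈ Icc 1 N, if n = 1 then a n / n else 0 := by
        refine sum_congr rfl fun n hn ↦ ?_
        rw [← sum_mul, filter_Icc_dvd_eq_divisors hn, sum_divisors_moebius]
        split_ifs <;> simp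
    _ = a 1 := by simp [hN]

theorem sum_mul_norm_sub_ofReal_sq {ι : Type*} (s : Finset ι) (w z : ι → ℝ) (y : ι → ℂ) :
    ∑ i ∈ s, w i * ‖y i - z i‖ ^ 2 =
      ∑ i ∈ s, w i * ‖y i‖ ^ 2 - 2 * (∑ i ∈ s, ((w i * z i : ℝ) : ℂ) * y i).re +
        ∑ i ∈ s, w i * z i ^ 2 := by
  simp only [Complex.sq_norm, Complex.normSq_apply, Complex.re_sum, Complex.re_ofReal_mul,
    Complex.sub_re, Complex.sub_im, Complex.ofReal_re, Complex.ofReal_im, mul_sum,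
    ← sum_sub_distrib, ← sum_add_distrib]
  exact sum_congr rfl fun i _ ↦ by ring

theorem one_le_sum_moebius_sq_div_totient {N : ℕ} (hN : 1 ≤ N) :
    1 ≤ ∑ n ∈ Icc 1 N, (μ n : ℝ) ^ 2 / φ n :=
  calc (1 : ℝ) = (μ 1 : ℝ) ^ 2 / φ 1 := by simp
    _ ≤ _ := single_le_sum (f := fun n ↦ (μ n : ℝ) ^ 2 / φ n) (fun n _ ↦ by positivity)
      (mem_Icc.2 ⟨le_rfl, hN⟩)

theorem sum_totient_div_sq_mul_moebius_weight_mul_sum_div (G : ℝ) {N : ℕ} (hN : 1 ≤ N)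
    (a : ℕ → ℂ) :
    ∑ ℓ ∈ Icc 1 N, ((φ ℓ / ℓ ^ 2 * (μ ℓ / G * (ℓ / φ ℓ)) : ℝ) : ℂ) *
      ∑ d ∈ Icc 1 (N / ℓ), a (d * ℓ) / d = ((1 / G : ℝ) : ℂ) * a 1 := by
  rw [← sum_moebius_mul_sum_div_eq hN a, mul_sum]
  refine sum_congr rfl fun ℓ hℓ ↦ ?_
  have : (φ ℓ : ℂ) ≠ 0 := Nat.cast_ne_zero.2 (Nat.totient_pos.2 (mem_Icc.1 hℓ).1).ne'
  push_cast
  field_simp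

theorem sum_totient_div_sq_mul_moebius_weight_sq (G : ℝ) (N : ℕ) :
    ∑ ℓ ∈ Icc 1 N, φ ℓ / ℓ ^ 2 * (μ ℓ / G * (ℓ / φ ℓ)) ^ 2 =
      (∑ ℓ ∈ Icc 1 N, (μ ℓ : ℝ) ^ 2 / φ ℓ) / G ^ 2 := by
  rw [sum_div]
  refine sum_congr rfl fun ℓ hℓ ↦ ?_
  have hℓ0 : (ℓ : ℝ) ≠ 0 := Nat.cast_ne_zero.2 (Nat.one_le_iff_ne_zero.1 (mem_Icc.1 hℓ).1)
  have : (φ ℓ : ℝ) ≠ 0 := Nat.cast_ne_zero.2 (Nat.totient_pos.2 (mem_Icc.1 hℓ).1).ne'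
  field_simp

/-- exact identity `∑ a(d)conj(a(e))/[d,e] = 1/G + ∑ (φ(ℓ)/ℓ²)|y(ℓ)-z(ℓ)|²`. -/
theorem quadratic_form_exact_identity (N : ℕ) (hN : 1 ≤ N) (a : ℕ → ℂ) (ha : a 1 = 1)
    (G : ℝ)
    (hG : G = ∑ n ∈ Finset.Icc 1 N, (ArithmeticFunction.moebius n : ℝ) ^ 2 / Nat.totient n)
    (y : ℕ → ℂ) (hy : ∀ ℓ, y ℓ = ∑ d ∈ Finset.Icc 1 (N / ℓ), a (d * ℓ) / (d : ℂ))
    (z : ℕ → ℝ)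
    (hz : ∀ ℓ, z ℓ = (ArithmeticFunction.moebius ℓ : ℝ) / G * ((ℓ : ℝ) / Nat.totient ℓ)) :
    (∑ d ∈ Finset.Icc 1 N, ∑ e ∈ Finset.Icc 1 N,
        a d * (starRingEnd ℂ) (a e) / (Nat.lcm d e : ℂ)) =
      ((1 / G : ℝ) : ℂ) + ∑ ℓ ∈ Finset.Icc 1 N,
        (((Nat.totient ℓ : ℝ) / (ℓ : ℝ) ^ 2 * ‖y ℓ - ((z ℓ : ℝ) : ℂ)‖ ^ 2 : ℝ) : ℂ) := by
  have hG0 : G ≠ 0 := (hG ▸ one_le_sum_moebius_sq_div_totient hN).trans_lt' one_pos |>.ne'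
  have hyz : ∑ ℓ ∈ Icc 1 N, ((φ ℓ / ℓ ^ 2 * z ℓ : ℝ) : ℂ) * y ℓ = ((1 / G : ℝ) : ℂ) := by
    simp only [hz, hy]
    rw [sum_totient_div_sq_mul_moebius_weight_mul_sum_div G hN a, ha, mul_one]
  have hzz : ∑ ℓ ∈ Icc 1 N, (φ ℓ / ℓ ^ 2 : ℝ) * z ℓ ^ 2 = 1 / G := by
    simp only [hz]
    rw [sum_totient_div_sq_mul_moebius_weight_sq, ← hG, sq, ← div_div, div_self hG0]
  have hreal : ∑ ℓ ∈ Icc 1 N, (φ ℓ / ℓ ^ 2 : ℝ) * ‖y ℓ‖ ^ 2 =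
      1 / G + ∑ ℓ ∈ Icc 1 N, (φ ℓ / ℓ ^ 2 : ℝ) * ‖y ℓ - z ℓ‖ ^ 2 := by
    rw [sum_mul_norm_sub_ofReal_sq, hyz, hzz, Complex.ofReal_re]
    ring
  rw [sum_sum_mul_conj_div_lcm_eq]
  simp only [← hy]
  exact_mod_cast hreal
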